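/- arXiv:1701.02844 — 4 statements merged into one kernel-verified Lean document; each statement's English description precedes it below -/
import Mathlib

section
/- Let G = (V,E) be a finite connected edge-weighted graph, let M be a minimum spanning tree of G, and let w ∈ ℝ. Then for all u, v ∈ V, u and v lie in the same connected component of the threshold subgraph M_{≤w} (the subgraph of M consisting of its edges of weight ≤ w) if and only if u and v lie in the same connected component of the threshold subgraph G_{≤w}. -/
open SimpleGraph

/-- The threshold subgraph `G_{≤ t}`: same vertices, only edges of weight `≤ t`. -/
def thresholdGraph {V : Type*} (G : SimpleGraph V) (w : Sym2 V → ℝ) (t : ℝ) :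
    SimpleGraph V where
  Adj u v := G.Adj u v ∧ w s(u, v) ≤ t
  symm := by
    constructor
    intro u v hv
    exact ⟨hv.1.symm, by rw [Sym2.eq_swap]; exact hv.2⟩
  loopless := ⟨fun v hv => G.irrefl hv.1⟩

/-- The strict threshold subgraph `G_{< t}`. -/
def strictThresholdGraph {V : Type*} (G : SimpleGraph V) (w : Sym2 V → ℝ) (t : ℝ) :
    SimpleGraph V where
  Adj u v := G.Adj u v ∧ w s(u, v) < t
  symm := by
    constructor
    intro u v hv
    exact ⟨hv.1.symm, by rw [Sym2.eq_swap]; exact hv.2⟩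
  loopless := ⟨fun v hv => G.irrefl hv.1⟩

/-- The laminar family of an edge-weighted graph: the whole vertex set together with the
vertex sets of the connected components of every threshold subgraph. -/
def laminarFamily {V : Type*} (G : SimpleGraph V) (w : Sym2 V → ℝ) : Set (Set V) :=
  insert Set.univ
    {S | ∃ (t : ℝ) (C : (thresholdGraph G w t).ConnectedComponent), S = C.supp}

/-- `M` is a spanning tree of `G`. -/
def IsSpanningTree {V : Type*} (G M : SimpleGraph V) : Prop :=
  M ≤ G ∧ M.IsTree

/-- Total weight of (the edges of) a graph. -/
noncomputable def totalWeight {V : Type*} [Finite V] (M : SimpleGraph V)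
    (w : Sym2 V → ℝ) : ℝ :=
  ∑ e ∈ M.edgeSet.toFinite.toFinset, w e

/-- `M` is a minimum spanning tree of `G` with respect to the weights `w`. -/
def IsMST {V : Type*} [Finite V] (G : SimpleGraph V) (w : Sym2 V → ℝ)
    (M : SimpleGraph V) : Prop :=
  IsSpanningTree G M ∧ ∀ M' : SimpleGraph V, IsSpanningTree G M' →
    totalWeight M w ≤ totalWeight M' w

/-- A phylogenetic tree: a finite tree with strictly positive edge lengths and a nonempty
set `L` of labeled vertices, each hidden vertex having degree at least 3. -/
structure PhyloTree (V : Type*) where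
  finV : Finite V
  T : SimpleGraph V
  isTree : T.IsTree
  len : Sym2 V → ℝ
  len_pos : ∀ e ∈ T.edgeSet, 0 < len e
  L : Set V
  L_nonempty : L.Nonempty
  hidden_deg : ∀ v, v ∉ L → 3 ≤ (T.neighborSet v).ncard

namespace PhyloTree

variable {V : Type*}

/-- The unique path between two vertices of the tree. -/
noncomputable def path (P : PhyloTree V) (u v : V) : P.T.Walk u v :=
  (P.isTree.existsUnique_path u v).exists.choose

lemma path_isPath (P : PhyloTree V) (u v : V) : (P.path u v).IsPath :=
  (P.isTree.existsUnique_path u v).exists.choose_spec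

/-- The tree distance: the sum of the edge lengths along the unique path. -/
noncomputable def dist (P : PhyloTree V) (u v : V) : ℝ :=
  ((P.path u v).edges.map P.len).sum

lemma dist_comm (P : PhyloTree V) (u v : V) : P.dist u v = P.dist v u := by
  have h : (P.path u v).reverse = P.path v u :=
    (P.isTree.existsUnique_path v u).unique ((P.path_isPath u v).reverse)
      (P.path_isPath v u)
  unfold dist
  rw [← h, SimpleGraph.Walk.edges_reverse, List.map_reverse, List.sum_reverse]

/-- The tree distance as a symmetric function on unordered pairs. -/
noncomputable def wdist (P : PhyloTree V) : Sym2 V → ℝ :=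
  Sym2.lift ⟨fun u v => P.dist u v, fun u v => P.dist_comm u v⟩

/-- The surrogate set of a vertex: the labeled vertices closest to it. -/
def Sg (P : PhyloTree V) (h : V) : Set V :=
  {l | l ∈ P.L ∧ ∀ l' ∈ P.L, P.dist l h ≤ P.dist l' h}

/-- `s` is the surrogate vertex `Sg_R(h)` of `h` w.r.t. the ranking `R`:
the element of the surrogate set of `h` of smallest `R`-value. -/
def IsSgR (P : PhyloTree V) (R : V → ℕ) (h : V) (s : V) : Prop :=
  s ∈ P.Sg h ∧ ∀ l ∈ P.Sg h, R s ≤ R l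

/-- The edge weights of the distance graph of `P` (the complete graph on `↥P.L`). -/
noncomputable def wG (P : PhyloTree V) : Sym2 ↥P.L → ℝ :=
  fun e => P.wdist (e.map Subtype.val)

/-- An edge `e` of the distance graph lying in at least one MST (i.e. an edge of `g`). -/
def mstEdge (P : PhyloTree V) (e : Sym2 ↥P.L) : Prop :=
  haveI := P.finV
  ∃ M : SimpleGraph ↥P.L, IsMST (⊤ : SimpleGraph ↥P.L) P.wG M ∧ e ∈ M.edgeSet

/-- `δ_max(v)`: the maximum degree of `v` over all MSTs of the distance graph. -/
noncomputable def deltaMax (P : PhyloTree V) (v : ↥P.L) : ℕ :=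
  haveI := P.finV
  sSup {d : ℕ | ∃ M : SimpleGraph ↥P.L,
    IsMST (⊤ : SimpleGraph ↥P.L) P.wG M ∧ d = (M.neighborSet v).ncard}

end PhyloTree

/-- The smaller of the two ranks of the endpoints of an edge. -/
def sym2MinR {α : Type*} (R : α → ℕ) : Sym2 α → ℕ :=
  Sym2.lift ⟨fun a b => min (R a) (R b), fun a b => min_comm _ _⟩

/-- The larger of the two ranks of the endpoints of an edge. -/
def sym2MaxR {α : Type*} (R : α → ℕ) : Sym2 α → ℕ :=
  Sym2.lift ⟨fun a b => max (R a) (R b), fun a b => max_comm _ _⟩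

/-- The strict total order `<_R` on edges: first by weight, then by the smaller rank of
the endpoints, then by the larger rank of the endpoints. -/
def edgeLT {α : Type*} (w : Sym2 α → ℝ) (R : α → ℕ) (e f : Sym2 α) : Prop :=
  w e < w f ∨ (w e = w f ∧ (sym2MinR R e < sym2MinR R f ∨
    (sym2MinR R e = sym2MinR R f ∧ sym2MaxR R e < sym2MaxR R f)))

/-- `M` is the vertex-ranked MST of `G` w.r.t. the ranking `R`: a spanning tree such that
every non-tree edge `{u,v}` of `G` is the `<_R`-greatest edge of the cycle it closes,
i.e. every edge of the `M`-path from `u` to `v` is `<_R`-smaller than `{u,v}`. -/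
def IsVRMST {α : Type*} (G : SimpleGraph α) (w : Sym2 α → ℝ) (R : α → ℕ)
    (M : SimpleGraph α) : Prop :=
  IsSpanningTree G M ∧ ∀ u v : α, G.Adj u v → ¬M.Adj u v →
    ∀ p : M.Walk u v, p.IsPath → ∀ f ∈ p.edges, edgeLT w R f s(u, v)

/-! An edge `xy` of `G_{≤t}` is bridged inside `M_{≤t}` by the tree path from `x` to `y`: by the
cycle property of minimum spanning trees every edge `e` of that path has `w e ≤ w xy ≤ t`. Indeed,
if `w e > w xy`, then `M + xy - e` is a lighter spanning tree: it stays connected because `e` lies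
on the fundamental cycle of `xy`, and it has as many edges as `M`. -/

namespace SimpleGraph

variable {V : Type*}

theorem Reachable.of_adj_le_reachable {G K : SimpleGraph V} (h : G.Adj ≤ K.Reachable)
    {u v : V} (huv : G.Reachable u v) : K.Reachable u v := by
  rw [reachable_iff_reflTransGen] at huv
  exact Relation.reflTransGen_le_of_equivalence_of_le K.reachable_is_equivalence h _ _ huv

theorem edgeSet_sup_edge_deleteEdges {M : SimpleGraph V} {a b : V} {e : Sym2 V} (hab : a ≠ b)
    (he : e ≠ s(a, b)) :
    ((M ⊔ edge a b).deleteEdges {e}).edgeSet = insert s(a, b) (M.edgeSet \ {e}) := by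
  rw [edgeSet_deleteEdges, edgeSet_sup, edgeSet_edge_of_ne hab, Set.union_singleton,
    Set.insert_sdiff_of_notMem _ (Set.notMem_singleton_iff.mpr he.symm)]

theorem IsTree.sup_edge_deleteEdges [Finite V] {M : SimpleGraph V} (hM : M.IsTree) {a b : V}
    (hnab : ¬M.Adj a b) {p : M.Walk a b} (hp : p.IsPath) {e : Sym2 V} (he : e ∈ p.edges) :
    ((M ⊔ edge a b).deleteEdges {e}).IsTree := by
  have hab : a ≠ b := by
    rintro rfl
    simp [Walk.edges_eq_nil.mpr (Walk.isPath_iff_nil.mp hp)] at he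
  have heM : e ∈ M.edgeSet := p.edges_subset_edgeSet he
  have hne : e ≠ s(a, b) := by
    rintro rfl
    exact hnab heM
  have hba : (M ⊔ edge a b).Adj b a := Or.inr ((edge_adj ..).mpr ⟨.inr ⟨rfl, rfl⟩, hab.symm⟩)
  have hcycle : (Walk.cons hba (p.mapLe le_sup_left)).IsCycle := by
    rw [Walk.cons_isCycle_iff, Walk.edges_mapLe_eq_edges, Sym2.eq_swap]
    exact ⟨hp.mapLe _, fun h => hnab (p.edges_subset_edgeSet h)⟩
  have hbridge : ¬(M ⊔ edge a b).IsBridge e :=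
    fun h => h.notMem_edges_of_isCycle hcycle (by simp [he])
  have hconn : ((M ⊔ edge a b).deleteEdges {e}).Connected := by
    induction e with
    | h x y => exact (hM.connected.mono le_sup_left).connected_delete_edge_of_not_isBridge hbridge
  rw [isTree_iff_connected_and_card, edgeSet_sup_edge_deleteEdges hab hne, Nat.card_coe_set_eq,
    Set.ncard_exchange (show s(a, b) ∉ M.edgeSet from hnab) heM, ← Nat.card_coe_set_eq]
  exact ⟨hconn, (isTree_iff_connected_and_card.mp hM).2⟩

end SimpleGraph

section MinimumSpanningTree

variable {V : Type*}

theorem totalWeight_of_edgeSet_eq_insert_diff [Finite V] {M M' : SimpleGraph V}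
    (w : Sym2 V → ℝ) {e f : Sym2 V} (he : e ∈ M.edgeSet) (hf : f ∉ M.edgeSet)
    (h : M'.edgeSet = insert f (M.edgeSet \ {e})) :
    totalWeight M' w = totalWeight M w - w e + w f := by
  classical
  have hfin : M'.edgeSet.toFinite.toFinset = insert f (M.edgeSet.toFinite.toFinset.erase e) := by
    ext g
    simp only [Set.Finite.mem_toFinset, h, Finset.mem_insert, Finset.mem_erase,
      Set.mem_insert_iff, Set.mem_sdiff, Set.mem_singleton_iff]
    tauto
  have hfe : f ∉ M.edgeSet.toFinite.toFinset.erase e := by simp [hf]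
  rw [totalWeight, totalWeight, hfin, Finset.sum_insert hfe,
    Finset.sum_erase_eq_sub (by simpa using he)]
  ring

theorem IsMST.weight_le_of_mem_edges [Finite V] {G M : SimpleGraph V} {w : Sym2 V → ℝ}
    (hM : IsMST G w M) {a b : V} (hab : G.Adj a b) {p : M.Walk a b} (hp : p.IsPath)
    {e : Sym2 V} (he : e ∈ p.edges) : w e ≤ w s(a, b) := by
  by_contra! hlt
  have hnab : ¬M.Adj a b := by
    intro hadj
    have hsingle : p = Walk.cons hadj Walk.nil := congrArg Subtype.val
      ((hM.1.2.isAcyclic.subsingleton_path a b).elim ⟨p, hp⟩ (Path.singleton hadj))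
    subst hsingle
    simp only [Walk.edges_cons, Walk.edges_nil, List.mem_singleton] at he
    exact hlt.ne' (congrArg w he)
  have hne : e ≠ s(a, b) := fun h => hlt.ne' (congrArg w h)
  have hspanning : IsSpanningTree G ((M ⊔ edge a b).deleteEdges {e}) :=
    ⟨(deleteEdges_le _).trans (sup_le hM.1.1 ((edge_le_iff G).mpr (.inr hab))),
      hM.1.2.sup_edge_deleteEdges hnab hp he⟩
  have hlighter := hM.2 _ hspanning
  rw [totalWeight_of_edgeSet_eq_insert_diff w (p.edges_subset_edgeSet he) hnab
    (edgeSet_sup_edge_deleteEdges hab.ne hne)] at hlighter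
  linarith

theorem mem_edgeSet_thresholdGraph {G : SimpleGraph V} {w : Sym2 V → ℝ} {t : ℝ}
    {e : Sym2 V} : e ∈ (thresholdGraph G w t).edgeSet ↔ e ∈ G.edgeSet ∧ w e ≤ t := by
  induction e with
  | h x y => rfl

theorem thresholdGraph_mono {G H : SimpleGraph V} (hGH : G ≤ H) (w : Sym2 V → ℝ) (t : ℝ) :
    thresholdGraph G w t ≤ thresholdGraph H w t :=
  fun _ _ h => ⟨hGH h.1, h.2⟩

theorem SimpleGraph.Walk.reachable_thresholdGraph {G : SimpleGraph V} {w : Sym2 V → ℝ} {t : ℝ}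
    {u v : V} (p : G.Walk u v) (hp : ∀ e ∈ p.edges, w e ≤ t) :
    (thresholdGraph G w t).Reachable u v :=
  ⟨p.transfer _ fun e he => mem_edgeSet_thresholdGraph.mpr ⟨p.edges_subset_edgeSet he, hp e he⟩⟩

end MinimumSpanningTree

theorem mst_threshold_reachable_iff_general {V : Type*} [Finite V] (G : SimpleGraph V)
    (w : Sym2 V → ℝ) (M : SimpleGraph V) (hM : IsMST G w M)
    (t : ℝ) :
    ∀ u v : V, (thresholdGraph M w t).Reachable u v ↔
      (thresholdGraph G w t).Reachable u v := by
  intro u v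
  refine ⟨fun h => h.mono (thresholdGraph_mono hM.1.1 w t), fun h => h.of_adj_le_reachable ?_⟩
  rintro x y ⟨hxy, hwt⟩
  obtain ⟨p, hp, -⟩ := hM.1.2.existsUnique_path x y
  exact p.reachable_thresholdGraph fun e he => (hM.weight_le_of_mem_edges hxy hp he).trans hwt

/-- an MST has the same threshold-connectivity as the original graph. -/
theorem mst_threshold_reachable_iff {V : Type*} [Finite V] (G : SimpleGraph V)
    (w : Sym2 V → ℝ) (hG : G.Connected) (M : SimpleGraph V) (hM : IsMST G w M)
    (t : ℝ) :
    ∀ u v : V, (thresholdGraph M w t).Reachable u v ↔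
      (thresholdGraph G w t).Reachable u v :=
  mst_threshold_reachable_iff_general G w M hM t
end

section
/- Let T be a phylogenetic tree with labeled vertex set L, let G be its distance graph, let R : L → ℕ be an injective ranking, and let M be the vertex-ranked MST of G with respect to R. If {i,j} ∈ E_T and Sg_R(i) ≠ Sg_R(j), then {Sg_R(i), Sg_R(j)} is an edge of M. -/
open SimpleGraph

/-!
Removing the edge `{i, j}` splits the tree into the side of `i` and the side of `j`, and a
labeled vertex `a` on the side of `i` and `b` on the side of `j` are at distance
`d(a, i) + ℓ(i, j) + d(j, b)`. The two surrogates lie on opposite sides, so every edge of the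
distance graph crossing this cut weighs at least `d(Sg_R(i), Sg_R(j))`, and in case of equality
its endpoints are surrogates of `i` and `j` as well, hence of no better rank. By the cut
property of the vertex-ranked MST, `{Sg_R(i), Sg_R(j)}` is then an edge of it.
-/

theorem not_edgeLT_mk_of_le {α : Type*} {w : Sym2 α → ℝ} {R : α → ℕ} {a b a' b' : α}
    (hw : w s(a, b) ≤ w s(a', b'))
    (hR : w s(a, b) = w s(a', b') → R a ≤ R a' ∧ R b ≤ R b') :
    ¬ edgeLT w R s(a', b') s(a, b) := by
  rintro (hlt | ⟨heq, hrank⟩)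
  · exact (hw.not_gt hlt).elim
  · obtain ⟨ha, hb⟩ := hR heq.symm
    have hmin : min (R a) (R b) ≤ min (R a') (R b') := min_le_min ha hb
    have hmax : max (R a) (R b) ≤ max (R a') (R b') := max_le_max ha hb
    simp only [sym2MinR, sym2MaxR, Sym2.lift_mk] at hrank
    omega

/-- The cut property of the vertex-ranked MST. -/
theorem IsVRMST.adj_of_forall_not_edgeLT {α : Type*} {G M : SimpleGraph α}
    {w : Sym2 α → ℝ} {R : α → ℕ} (hM : IsVRMST G w R M) {u v : α} (huv : G.Adj u v)
    (S : Set α) (hu : u ∈ S) (hv : v ∉ S)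
    (hS : ∀ a b, M.Adj a b → a ∈ S → b ∉ S → ¬ edgeLT w R s(a, b) s(u, v)) :
    M.Adj u v := by
  classical
  by_contra hnadj
  obtain ⟨p⟩ := hM.1.2.connected.preconnected u v
  obtain ⟨d, hd, hdS, hdS'⟩ := p.bypass.exists_boundary_dart S hu hv
  exact hS _ _ d.adj hdS hdS'
    (hM.2 u v huv hnadj _ p.bypass_isPath d.edge (List.mem_map_of_mem hd))

namespace PhyloTree

variable {V : Type*} (P : PhyloTree V)

theorem path_eq {u v : V} (q : P.T.Walk u v) (hq : q.IsPath) : P.path u v = q :=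
  (P.isTree.existsUnique_path u v).unique (P.path_isPath u v) hq

theorem dist_eq_of_isPath {u v : V} (q : P.T.Walk u v) (hq : q.IsPath) :
    P.dist u v = (q.edges.map P.len).sum := by
  rw [dist, P.path_eq q hq]

theorem dist_of_adj {u v : V} (h : P.T.Adj u v) : P.dist u v = P.len s(u, v) := by
  rw [P.dist_eq_of_isPath (Walk.cons h Walk.nil) (by simp [h.ne])]
  simp

theorem dist_eq_add_of_mem_support {u v x : V} (hx : x ∈ (P.path u v).support) :
    P.dist u v = P.dist u x + P.dist x v := by
  classical
  have hpath := P.path_isPath u v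
  rw [P.dist_eq_of_isPath _ (hpath.takeUntil hx), P.dist_eq_of_isPath _ (hpath.dropUntil hx),
    ← List.sum_append, ← List.map_append, ← Walk.edges_append, Walk.take_spec, dist]

/-- The side of `i` of the edge `{i, j}`: the vertices whose path to `j` runs through `i`. -/
def side (i j : V) : Set V :=
  {v | P.dist v j = P.dist v i + P.len s(i, j)}

variable {P}

theorem mem_side {i j v : V} : v ∈ P.side i j ↔ P.dist v j = P.dist v i + P.len s(i, j) :=
  Iff.rfl

theorem mem_side_or_mem_side {i j : V} (hij : P.T.Adj i j) (v : V) :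
    v ∈ P.side i j ∨ v ∈ P.side j i := by
  classical
  by_cases hj : j ∈ (P.path v i).support
  · right
    rw [mem_side, P.dist_eq_add_of_mem_support hj, P.dist_of_adj hij.symm]
  · left
    have hpath : ((P.path v i).concat hij).IsPath := by
      rw [← Walk.isPath_reverse_iff, Walk.reverse_concat]
      exact (P.path_isPath v i).reverse.cons (by simpa using hj)
    rw [mem_side, P.dist_eq_of_isPath _ hpath, Walk.edges_concat,
      List.concat_eq_append, List.map_append, List.sum_append,
      ← P.dist_eq_of_isPath _ (P.path_isPath v i)]
    simp

theorem notMem_side_of_mem_side {i j v : V} (hij : P.T.Adj i j) (hv : v ∈ P.side j i) :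
    v ∉ P.side i j := by
  intro hv'
  have hpos : 0 < P.len s(i, j) := P.len_pos _ hij
  simp only [mem_side, Sym2.eq_swap (a := j)] at hv hv'
  linarith

theorem notMem_support_path_of_mem_side {i j a : V} (hij : P.T.Adj i j)
    (ha : a ∈ P.side i j) : j ∉ (P.path a i).support := by
  intro hj
  have hpos : 0 < P.len s(i, j) := P.len_pos _ hij
  have hsplit := P.dist_eq_add_of_mem_support hj
  rw [P.dist_of_adj hij.symm, Sym2.eq_swap] at hsplit
  simp only [mem_side] at ha
  linarith

theorem dist_of_mem_side {i j a b : V} (hij : P.T.Adj i j) (ha : a ∈ P.side i j)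
    (hb : b ∈ P.side j i) : P.dist a b = P.dist a i + P.len s(i, j) + P.dist j b := by
  have hja := notMem_support_path_of_mem_side hij ha
  have hib := notMem_support_path_of_mem_side hij.symm hb
  have hbridge : P.T.IsBridge s(i, j) :=
    isAcyclic_iff_forall_adj_isBridge.1 P.isTree.isAcyclic hij
  have hcross := isBridge_iff_forall_walk_mem_edges.1 hbridge
    ((P.path a i).reverse.append ((P.path a b).append (P.path b j)))
  simp only [Walk.edges_append, Walk.edges_reverse, List.mem_append, List.mem_reverse] at hcross
  have hi : i ∈ (P.path a b).support := by
    rcases hcross with h | h | h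
    · exact (hja ((P.path a i).snd_mem_support_of_mem_edges h)).elim
    · exact (P.path a b).fst_mem_support_of_mem_edges h
    · exact (hib ((P.path b j).fst_mem_support_of_mem_edges h)).elim
  simp only [mem_side, Sym2.eq_swap (a := j)] at hb
  rw [P.dist_eq_add_of_mem_support hi, P.dist_comm i b, hb, P.dist_comm b j]
  ring

theorem IsSgR.le_of_dist_le {R : V → ℕ} {h s l : V} (hs : P.IsSgR R h s) (hl : l ∈ P.L)
    (hdist : P.dist l h ≤ P.dist s h) : R s ≤ R l :=
  hs.2 l ⟨hl, fun l' hl' => hdist.trans (hs.1.2 l' hl')⟩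

theorem surrogate_mem_side {R : V → ℕ} (hR : Set.InjOn R P.L) {i j si sj : V}
    (hij : P.T.Adj i j) (hsi : P.IsSgR R i si) (hsj : P.IsSgR R j sj) (hne : si ≠ sj) :
    si ∈ P.side i j := by
  have hpos : 0 < P.len s(i, j) := P.len_pos _ hij
  have hsi_le := hsi.1.2 sj hsj.1.1
  have hsj_le := hsj.1.2 si hsi.1.1
  refine (mem_side_or_mem_side hij si).resolve_right fun hsi_side => ?_
  simp only [mem_side, Sym2.eq_swap (a := j)] at hsi_side
  rcases mem_side_or_mem_side hij sj with hsj_side | hsj_side <;>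
    simp only [mem_side, Sym2.eq_swap (a := j)] at hsj_side
  · linarith
  · -- `si` and `sj` are then surrogates of both `i` and `j`
    have hrank_si := hsi.le_of_dist_le hsj.1.1 (by linarith)
    have hrank_sj := hsj.le_of_dist_le hsi.1.1 (by linarith)
    exact hne (hR hsi.1.1 hsj.1.1 (le_antisymm hrank_si hrank_sj))

theorem wG_mk (a b : P.L) : P.wG s(a, b) = P.dist a b := rfl

theorem not_edgeLT_surrogates {R : V → ℕ} {i j si sj : V} (hij : P.T.Adj i j)
    (hsi : P.IsSgR R i si) (hsj : P.IsSgR R j sj)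
    (hsi_side : si ∈ P.side i j) (hsj_side : sj ∈ P.side j i)
    {a b : P.L} (ha : a.val ∈ P.side i j) (hb : b.val ∈ P.side j i) :
    ¬ edgeLT P.wG (fun x => R x.val) s(a, b) s(⟨si, hsi.1.1⟩, ⟨sj, hsj.1.1⟩) := by
  have hai := hsi.1.2 a a.2
  have hbj := hsj.1.2 b b.2
  have hab := dist_of_mem_side hij ha hb
  have hsisj := dist_of_mem_side hij hsi_side hsj_side
  rw [P.dist_comm j b] at hab
  rw [P.dist_comm j sj] at hsisj
  refine not_edgeLT_mk_of_le ?_ fun heq => ?_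
  · rw [wG_mk, wG_mk, hab, hsisj]
    linarith
  · rw [wG_mk, wG_mk, hab, hsisj] at heq
    exact ⟨hsi.le_of_dist_le a.2 (by linarith), hsj.le_of_dist_le b.2 (by linarith)⟩

end PhyloTree

/-- distinct surrogates of adjacent tree vertices are adjacent in the
vertex-ranked MST of the distance graph. -/
theorem surrogates_adj_in_vrmst {V : Type*} (P : PhyloTree V) (R : V → ℕ)
    (hR : Set.InjOn R P.L) (M : SimpleGraph ↥P.L)
    (hM : IsVRMST (⊤ : SimpleGraph ↥P.L) P.wG (fun x => R x.val) M)
    (i j si sj : V) (hij : P.T.Adj i j)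
    (hsi : P.IsSgR R i si) (hsj : P.IsSgR R j sj) (hne : si ≠ sj) :
    M.Adj ⟨si, hsi.1.1⟩ ⟨sj, hsj.1.1⟩ := by
  have hsi_side := P.surrogate_mem_side hR hij hsi hsj hne
  have hsj_side := P.surrogate_mem_side hR hij.symm hsj hsi hne.symm
  refine hM.adj_of_forall_not_edgeLT (fun h => hne (congrArg Subtype.val h))
    {x | x.val ∈ P.side i j} hsi_side
    (PhyloTree.notMem_side_of_mem_side hij hsj_side) fun a b _ ha hb => ?_
  exact PhyloTree.not_edgeLT_surrogates hij hsi hsj hsi_side hsj_side ha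
    ((PhyloTree.mem_side_or_mem_side hij b).resolve_left hb)
end

section
/- Let G be a finite connected edge-weighted graph with laminar family F, and let g be the subgraph of G consisting of all edges of G that lie in at least one MST of G. Let v be a vertex, let j₁ ≠ j₂ be two neighbors of v in g, and suppose there is a set S ∈ F with j₁ ∈ S, j₂ ∈ S and v ∉ S. Then no MST of G contains both of the edges {v, j₁} and {v, j₂}. -/
open SimpleGraph

/-!
Let `S` be a component of `G_{≤ t}`. As `j₁ ∈ S` and `v ∉ S`, the edge `vj₁` is heavier
than `t`. Deleting `vj₁` from a spanning tree containing `vj₁` and `vj₂` leaves `j₁` on one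
side and `v`, `j₂` on the other. A path from `j₁` to `j₂` inside `G_{≤ t}` crosses this cut
by an edge of weight `≤ t`, and exchanging it for `vj₁` yields a lighter spanning tree.
-/

namespace SimpleGraph

variable {V : Type*}

lemma thresholdGraph_adj {G : SimpleGraph V} {w : Sym2 V → ℝ} {t : ℝ} {u v : V} :
    (thresholdGraph G w t).Adj u v ↔ G.Adj u v ∧ w s(u, v) ≤ t :=
  Iff.rfl

lemma IsAcyclic.not_reachable_deleteEdges {M : SimpleGraph V} (hM : M.IsAcyclic) {v j a b : V}
    (hvj : M.Adj v j) (ha : (M.deleteEdges {s(v, j)}).Reachable j a)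
    (hb : (M.deleteEdges {s(v, j)}).Reachable v b) :
    ¬(M.deleteEdges {s(v, j)}).Reachable a b := fun h =>
  isBridge_iff.mp (isAcyclic_iff_forall_adj_isBridge.mp hM hvj) (hb.trans (h.symm.trans ha.symm))

lemma Walk.reachable_deleteEdges_or {M : SimpleGraph V} {x u : V} (v : V) (p : M.Walk x u) :
    (M.deleteEdges {s(u, v)}).Reachable x u ∨ (M.deleteEdges {s(u, v)}).Reachable x v := by
  induction p with
  | nil => exact Or.inl .rfl
  | @cons x y u hxy q ih =>
    by_cases he : s(x, y) = s(u, v)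
    · rcases Sym2.eq_iff.mp he with ⟨rfl, -⟩ | ⟨rfl, -⟩
      · exact Or.inl .rfl
      · exact Or.inr .rfl
    · have hxy' : (M.deleteEdges {s(u, v)}).Adj x y := deleteEdges_adj.mpr ⟨hxy, he⟩
      exact ih.imp hxy'.reachable.trans hxy'.reachable.trans

lemma IsTree.deleteEdges_sup_edge {M : SimpleGraph V} (hM : M.IsTree) {v j a b : V}
    (hvj : M.Adj v j) (ha : (M.deleteEdges {s(v, j)}).Reachable j a)
    (hb : (M.deleteEdges {s(v, j)}).Reachable v b) :
    (M.deleteEdges {s(v, j)} ⊔ edge a b).IsTree := by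
  set Md := M.deleteEdges {s(v, j)}
  have hab : ¬Md.Reachable a b := hM.isAcyclic.not_reachable_deleteEdges hvj ha hb
  have hle : Md ≤ Md ⊔ edge a b := le_sup_left
  have hvj' : (Md ⊔ edge a b).Reachable v j := by
    have hab' : (Md ⊔ edge a b).Adj a b :=
      Or.inr ((edge_adj ..).mpr ⟨Or.inl ⟨rfl, rfl⟩, fun h => hab (h ▸ .refl a)⟩)
    exact (hb.mono hle).trans (hab'.reachable.symm.trans (ha.mono hle).symm)
  have hcomp (x : V) : (Md ⊔ edge a b).Reachable x v := by
    obtain ⟨p⟩ := hM.connected.preconnected x v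
    exact (p.reachable_deleteEdges_or j).elim (·.mono hle) fun h => (h.mono hle).trans hvj'.symm
  have : Nonempty V := ⟨v⟩
  exact ⟨⟨fun x y => (hcomp x).trans (hcomp y).symm⟩,
    (hM.isAcyclic.anti (deleteEdges_le _)).sup_edge_of_not_reachable hab⟩

end SimpleGraph

open SimpleGraph

section totalWeight

variable {V : Type*} [Finite V] {M : SimpleGraph V} (w : Sym2 V → ℝ)

lemma totalWeight_deleteEdges_singleton {e : Sym2 V} (he : e ∈ M.edgeSet) :
    totalWeight (M.deleteEdges {e}) w = totalWeight M w - w e := by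
  classical
  have hset : (M.deleteEdges {e}).edgeSet.toFinite.toFinset =
      M.edgeSet.toFinite.toFinset.erase e := by
    ext f
    simp [edgeSet_deleteEdges, and_comm]
  rw [totalWeight, totalWeight, hset, Finset.sum_erase_eq_sub (by simpa using he)]

lemma totalWeight_sup_edge {a b : V} (hab : a ≠ b) (hM : ¬M.Adj a b) :
    totalWeight (M ⊔ edge a b) w = totalWeight M w + w s(a, b) := by
  classical
  have hset : (M ⊔ edge a b).edgeSet.toFinite.toFinset =
      insert s(a, b) M.edgeSet.toFinite.toFinset := by
    ext f
    simp [edgeSet_sup, edgeSet_edge_of_ne hab]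
  rw [totalWeight, totalWeight, hset, Finset.sum_insert (by simpa using hM), add_comm]

end totalWeight

/-- The cut property of minimum spanning trees. -/
theorem IsMST.weight_le_of_reachable_deleteEdges {V : Type*} [Finite V] {G M : SimpleGraph V}
    {w : Sym2 V → ℝ} (hM : IsMST G w M) {v j a b : V} (hvj : M.Adj v j) (hab : G.Adj a b)
    (ha : (M.deleteEdges {s(v, j)}).Reachable j a)
    (hb : (M.deleteEdges {s(v, j)}).Reachable v b) :
    w s(v, j) ≤ w s(a, b) := by
  obtain ⟨⟨hMG, hMtree⟩, hmin⟩ := hM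
  set Md := M.deleteEdges {s(v, j)}
  have hnab : ¬Md.Reachable a b := hMtree.isAcyclic.not_reachable_deleteEdges hvj ha hb
  have hT : IsSpanningTree G (Md ⊔ edge a b) :=
    ⟨sup_le ((deleteEdges_le _).trans hMG) ((edge_le_iff G).mpr (Or.inr hab)),
      hMtree.deleteEdges_sup_edge hvj ha hb⟩
  have hweight := hmin _ hT
  rw [totalWeight_sup_edge w (by rintro rfl; exact hnab .rfl) (fun h => hnab h.reachable),
    totalWeight_deleteEdges_singleton w hvj] at hweight
  linarith

theorem no_mst_contains_both_edges_general {V : Type*} [Finite V] (G : SimpleGraph V)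
    (w : Sym2 V → ℝ) (v j₁ j₂ : V) (hne : j₁ ≠ j₂)
    (S : Set V) (hS : S ∈ laminarFamily G w)
    (hj1 : j₁ ∈ S) (hj2 : j₂ ∈ S) (hv : v ∉ S) :
    ∀ M : SimpleGraph V, IsMST G w M → ¬(M.Adj v j₁ ∧ M.Adj v j₂) := by
  rintro M hM ⟨hM1, hM2⟩
  obtain ⟨t, C, rfl⟩ : ∃ t, ∃ C : (thresholdGraph G w t).ConnectedComponent, S = C.supp :=
    hS.resolve_left fun h => hv (h ▸ trivial)
  set Md := M.deleteEdges {s(v, j₁)}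
  have hheavy : t < w s(v, j₁) := by
    by_contra! h
    exact hv ((C.mem_supp_congr_adj (thresholdGraph_adj.mpr ⟨hM.1.1 hM1, h⟩)).mpr hj1)
  have hvj₂ : Md.Adj v j₂ :=
    deleteEdges_adj.mpr
      ⟨hM2, fun h => hne (Sym2.congr_right.mp (h : s(v, j₂) = s(v, j₁))).symm⟩
  have hj₂ : ¬Md.Reachable j₁ j₂ :=
    hM.1.2.isAcyclic.not_reachable_deleteEdges hM1 .rfl hvj₂.reachable
  obtain ⟨p⟩ : (thresholdGraph G w t).Reachable j₁ j₂ :=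
    ConnectedComponent.exact
      (((C.mem_supp_iff _).mp hj1).trans ((C.mem_supp_iff _).mp hj2).symm)
  obtain ⟨d, -, hd₁, hd₂⟩ := p.exists_boundary_dart {x | Md.Reachable j₁ x} .rfl hj₂
  obtain ⟨hd, hdt⟩ := thresholdGraph_adj.mp d.adj
  obtain ⟨q⟩ := hM.1.2.connected.preconnected d.snd v
  have hd₂v : Md.Reachable v d.snd :=
    ((q.reachable_deleteEdges_or j₁).resolve_right fun h => hd₂ h.symm).symm
  linarith [hM.weight_le_of_reachable_deleteEdges hM1 hd hd₁ hd₂v]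

/-- if two `g`-neighbors of `v` lie in a common laminar-family set avoiding
`v`, then no MST contains both edges from `v` to them. -/
theorem no_mst_contains_both_edges {V : Type*} [Finite V] (G : SimpleGraph V)
    (w : Sym2 V → ℝ) (hG : G.Connected) (v j₁ j₂ : V) (hne : j₁ ≠ j₂)
    (h1 : ∃ M : SimpleGraph V, IsMST G w M ∧ M.Adj v j₁)
    (h2 : ∃ M : SimpleGraph V, IsMST G w M ∧ M.Adj v j₂)
    (S : Set V) (hS : S ∈ laminarFamily G w)
    (hj1 : j₁ ∈ S) (hj2 : j₂ ∈ S) (hv : v ∉ S) :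
    ∀ M : SimpleGraph V, IsMST G w M → ¬(M.Adj v j₁ ∧ M.Adj v j₂) :=
  no_mst_contains_both_edges_general G w v j₁ j₂ hne S hS hj1 hj2 hv
end

section
/- Let T be a phylogenetic tree with labeled vertex set L and let G be its distance graph, with g the subgraph of G consisting of all edges lying in at least one MST of G. Then for every labeled vertex v, δ_max(v) equals the sum, over all values w ∈ ℝ that occur as edge weights of G, of the number of connected components C of the strict threshold subgraph G_{<w} (vertex set L, edges of weight strictly less than w) such that some vertex j ∈ C is joined to v by an edge of g of weight exactly w. -/
/-!
Exchanging an edge `f` of a spanning tree `M` for a non-edge `xy` separated by `f` gives a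
spanning tree of weight `w(M) - w f + w(xy)`. Hence in an MST every edge `ab` is minimal across
its cut, so the strict threshold graph `G_{<w(ab)}` never joins the two sides of `ab`. In
particular two MST neighbours `j ≠ k` of `v` lie in different components of `G_{<w(vj)}`: the
map `j ↦ (w(vj), component of j in G_{<w(vj)})` is injective on MST neighbourhoods of `v`, and
the sum in the theorem is the size of its image on the set of all `g`-neighbours of `v`.
Conversely, fix one `g`-neighbour for each point of this image and take an MST containing as many
of them as possible. If one of them, `j`, were missing, the MST path from `v` to `j` contains an
edge of weight `w(vj)`; exchanging it for `vj` would gain a chosen neighbour, unless the only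
such edge is the first one, `vu` with `u` chosen. But then the rest of the path joins `u` to `j`
below `w(vj)`, so `u` and `j` were chosen for the same point, i.e. `u = j`.
-/

open SimpleGraph

namespace SimpleGraph

variable {α : Type*} {G H M : SimpleGraph α} {a b x y : α}

lemma reachable_le_reachable (h : G.Adj ≤ H.Reachable) : G.Reachable ≤ H.Reachable := by
  simp only [reachable_eq_reflTransGen] at h ⊢
  exact Relation.reflTransGen_closed h

lemma Connected.reachable_deleteEdges_or (hM : M.Connected) (a b u : α) :
    (M.deleteEdges {s(a, b)}).Reachable a u ∨ (M.deleteEdges {s(a, b)}).Reachable b u := by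
  induction (reachable_iff_reflTransGen a u).mp (hM a u) with
  | refl => exact Or.inl .rfl
  | @tail u u' _ huu' ih =>
    by_cases hf : s(u, u') = s(a, b)
    · rcases Sym2.eq_iff.mp hf with ⟨-, rfl⟩ | ⟨-, rfl⟩
      exacts [Or.inr .rfl, Or.inl .rfl]
    · have h : (M.deleteEdges {s(a, b)}).Adj u u' := by simp [huu', hf]
      exact ih.imp (·.trans h.reachable) (·.trans h.reachable)

lemma IsTree.not_reachable_deleteEdges (hM : M.IsTree) (hab : M.Adj a b) :
    ¬ (M.deleteEdges {s(a, b)}).Reachable a b :=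
  isBridge_iff.mp (isAcyclic_iff_forall_adj_isBridge.mp hM.isAcyclic hab)

lemma IsTree.not_reachable_deleteEdges_of_mem_edges (hM : M.IsTree) {p : M.Walk x y}
    (hp : p.IsPath) {f : Sym2 α} (hf : f ∈ p.edges) : ¬ (M.deleteEdges {f}).Reachable x y := by
  classical
  induction f using Sym2.ind with
  | _ a b =>
  rintro hr
  obtain ⟨q, hq⟩ := reachable_deleteEdges_iff_exists_walk.mp hr
  have : q.bypass = p := (hM.existsUnique_path x y).unique q.bypass_isPath hp
  exact hq (q.edges_bypass_subset_edges (this ▸ hf))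

lemma Connected.connected_deleteEdges_sup_edge (hM : M.Connected) (hab : M.Adj a b)
    (hxy : ¬ (M.deleteEdges {s(a, b)}).Reachable x y) :
    (M.deleteEdges {s(a, b)} ⊔ edge x y).Connected := by
  set N := M.deleteEdges {s(a, b)} ⊔ edge x y
  have hle : M.deleteEdges {s(a, b)} ≤ N := le_sup_left
  have hxy' : N.Adj x y := by
    simp only [N, sup_adj, edge_adj]
    grind [Reachable.rfl]
  -- `x` and `y` lie on opposite sides of the bridge `ab`
  have hab' : N.Reachable a b := by
    rcases hM.reachable_deleteEdges_or a b x with hx | hx <;>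
      rcases hM.reachable_deleteEdges_or a b y with hy | hy
    · exact absurd (hx.symm.trans hy) hxy
    · exact ((hx.mono hle).trans hxy'.reachable).trans (hy.mono hle).symm
    · exact (((hx.mono hle).trans hxy'.reachable).trans (hy.mono hle).symm).symm
    · exact absurd (hx.symm.trans hy) hxy
  refine (connected_iff_exists_forall_reachable N).mpr ⟨a, fun u => ?_⟩
  refine reachable_le_reachable (fun u u' huu' => ?_) a u (hM a u)
  by_cases hf : s(u, u') = s(a, b)
  · rcases Sym2.eq_iff.mp hf with ⟨rfl, rfl⟩ | ⟨rfl, rfl⟩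
    exacts [hab', hab'.symm]
  · exact Adj.reachable (hle (by simp [huu', hf]))

lemma IsTree.isTree_deleteEdges_sup_edge (hM : M.IsTree) {f : Sym2 α} (hf : f ∈ M.edgeSet)
    (hxy : ¬ (M.deleteEdges {f}).Reachable x y) : (M.deleteEdges {f} ⊔ edge x y).IsTree := by
  induction f using Sym2.ind with
  | _ a b =>
  exact ⟨hM.connected.connected_deleteEdges_sup_edge hf hxy,
    (hM.isAcyclic.anti (deleteEdges_le _)).sup_edge_of_not_reachable hxy⟩

lemma neighborSet_inter_ssubset_deleteEdges_sup_edge {J : Set α} {f : Sym2 α} {v j : α}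
    (hvj : v ≠ j) (hj : j ∈ J) (hjM : ¬ M.Adj v j) (hf : ∀ x ∈ J, f ≠ s(v, x)) :
    M.neighborSet v ∩ J ⊂ (M.deleteEdges {f} ⊔ edge v j).neighborSet v ∩ J := by
  have hsub : M.neighborSet v ∩ J ⊆ (M.deleteEdges {f} ⊔ edge v j).neighborSet v ∩ J :=
    fun x ⟨hx, hxJ⟩ => ⟨Or.inl (deleteEdges_adj.mpr ⟨hx, (hf x hxJ).symm⟩), hxJ⟩
  refine (Set.ssubset_iff_of_subset hsub).mpr ⟨j, ⟨Or.inr ?_, hj⟩, fun h => hjM h.1⟩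
  simp [edge_adj, hvj]

end SimpleGraph

section MinimumSpanningTree

open SimpleGraph

variable {α : Type*} [Finite α] {w : Sym2 α → ℝ} {M : SimpleGraph α} {f : Sym2 α}
  {x y : α}

lemma totalWeight_deleteEdges_sup_edge (hf : f ∈ M.edgeSet)
    (hxy : ¬ (M.deleteEdges {f}).Reachable x y) :
    totalWeight (M.deleteEdges {f} ⊔ edge x y) w = totalWeight M w - w f + w s(x, y) := by
  classical
  have hne : x ≠ y := fun h => hxy (h ▸ .rfl)
  have he : s(x, y) ∉ M.edgeSet \ {f} := fun he =>
    hxy (Adj.reachable (by simpa [edgeSet_deleteEdges] using he))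
  have hE : (M.deleteEdges {f} ⊔ edge x y).edgeSet.toFinite.toFinset =
      insert s(x, y) (M.edgeSet.toFinite.toFinset.erase f) := by
    ext e
    simp only [Set.Finite.mem_toFinset, edgeSet_sup, edgeSet_deleteEdges, edgeSet_edge,
      Finset.mem_insert, Finset.mem_erase]
    aesop
  rw [totalWeight, totalWeight, hE, Finset.sum_insert (by simpa [and_comm] using he),
    ← Finset.sum_erase_add _ _ ((Set.Finite.mem_toFinset _).mpr hf)]
  ring

lemma IsMST.weight_le_of_not_reachable (hM : IsMST ⊤ w M) (hf : f ∈ M.edgeSet)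
    (hxy : ¬ (M.deleteEdges {f}).Reachable x y) : w f ≤ w s(x, y) := by
  have := hM.2 _ ⟨le_top, hM.1.2.isTree_deleteEdges_sup_edge hf hxy⟩
  rw [totalWeight_deleteEdges_sup_edge hf hxy] at this
  linarith

lemma IsMST.deleteEdges_sup_edge (hM : IsMST ⊤ w M) (hf : f ∈ M.edgeSet)
    (hxy : ¬ (M.deleteEdges {f}).Reachable x y) (hw : w f = w s(x, y)) :
    IsMST ⊤ w (M.deleteEdges {f} ⊔ edge x y) := by
  refine ⟨⟨le_top, hM.1.2.isTree_deleteEdges_sup_edge hf hxy⟩, fun M' hM' => ?_⟩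
  rw [totalWeight_deleteEdges_sup_edge hf hxy, hw, sub_add_cancel]
  exact hM.2 M' hM'

lemma IsMST.reachable_deleteEdges_of_reachable (hM : IsMST ⊤ w M) (hf : f ∈ M.edgeSet)
    (h : (strictThresholdGraph ⊤ w (w f)).Reachable x y) : (M.deleteEdges {f}).Reachable x y :=
  reachable_le_reachable (G := strictThresholdGraph ⊤ w (w f)) (fun _ _ huv => by_contra fun hn =>
    (hM.weight_le_of_not_reachable hf hn).not_gt huv.2) x y h

lemma IsMST.not_reachable_strictThresholdGraph_of_adj (hM : IsMST ⊤ w M) {a b : α}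
    (hab : M.Adj a b) :
    ¬ (strictThresholdGraph ⊤ w (w s(a, b))).Reachable a b := fun h =>
  hM.1.2.not_reachable_deleteEdges hab (hM.reachable_deleteEdges_of_reachable hab h)

lemma IsMST.not_reachable_strictThresholdGraph_of_adj_of_adj (hM : IsMST ⊤ w M) {v j k : α}
    (hj : M.Adj v j) (hk : M.Adj v k) (hjk : j ≠ k) :
    ¬ (strictThresholdGraph ⊤ w (w s(v, j))).Reachable j k := by
  rw [Sym2.eq_swap]
  intro h
  have hkv : (M.deleteEdges {s(j, v)}).Adj k v := by
    simp [hk.symm, hjk.symm, hk.ne.symm]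
  exact hM.1.2.not_reachable_deleteEdges hj.symm
    ((hM.reachable_deleteEdges_of_reachable hj.symm h).trans hkv.reachable)

end MinimumSpanningTree

lemma Set.ncard_eq_sum_ncard_sigma {ι : Type*} {κ : ι → Type*} {S : Set (Σ i, κ i)}
    (hS : S.Finite) {s : Finset ι} (hs : ∀ p ∈ S, p.1 ∈ s) :
    S.ncard = ∑ i ∈ s, {x | (⟨i, x⟩ : Σ i, κ i) ∈ S}.ncard := by
  classical
  have hfib (i : ι) : {x | (⟨i, x⟩ : Σ i, κ i) ∈ S}.Finite :=
    hS.preimage sigma_mk_injective.injOn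
  have hS' : S = ↑(s.sigma fun i => (hfib i).toFinset) := by
    ext ⟨i, x⟩
    simpa using fun h => hs _ h
  calc S.ncard = (s.sigma fun i => (hfib i).toFinset).card :=
        (congrArg Set.ncard hS').trans (Set.ncard_coe_finset _)
    _ = _ := by
      rw [Finset.card_sigma]
      exact Finset.sum_congr rfl fun i _ => (Set.ncard_eq_toFinset_card _ (hfib i)).symm

section LevelComponent

open SimpleGraph

variable {α : Type*} {w : Sym2 α → ℝ} {v : α}

lemma SimpleGraph.Walk.reachable_strictThresholdGraph {G : SimpleGraph α} {t : ℝ} {u j : α}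
    (q : G.Walk u j) (hq : ∀ e ∈ q.edges, w e < t) :
    (strictThresholdGraph ⊤ w t).Reachable u j := by
  induction q with
  | nil => exact .rfl
  | cons h q ih =>
    simp only [Walk.edges_cons, List.mem_cons, forall_eq_or_imp] at hq
    have hadj : (strictThresholdGraph ⊤ w t).Adj _ _ := ⟨h.ne, hq.1⟩
    exact hadj.reachable.trans (ih hq.2)

def levelComponent (w : Sym2 α → ℝ) (v j : α) :
    Σ t : ℝ, (strictThresholdGraph ⊤ w t).ConnectedComponent :=
  ⟨w s(v, j), (strictThresholdGraph ⊤ w _).connectedComponentMk j⟩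

lemma levelComponent_eq_iff {j k : α} :
    levelComponent w v j = levelComponent w v k ↔
      w s(v, j) = w s(v, k) ∧ (strictThresholdGraph ⊤ w (w s(v, j))).Reachable j k := by
  rw [levelComponent, levelComponent, Sigma.mk.inj_iff]
  generalize w s(v, k) = t'
  constructor
  · rintro ⟨rfl, h⟩
    exact ⟨rfl, ConnectedComponent.exact (eq_of_heq h)⟩
  · rintro ⟨rfl, h⟩
    exact ⟨rfl, heq_of_eq (ConnectedComponent.sound h)⟩

end LevelComponent

section MaxDegree

open SimpleGraph

variable {α : Type*} [Finite α] {w : Sym2 α → ℝ} {v : α}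

def mstNeighborSet (w : Sym2 α → ℝ) (v : α) : Set α :=
  {j | ∃ M, IsMST ⊤ w M ∧ s(v, j) ∈ M.edgeSet}

lemma sum_ncard_eq_ncard_image_levelComponent :
    ∑ t ∈ ((Set.toFinite ((⊤ : SimpleGraph α).edgeSet)).image w).toFinset,
        {C : (strictThresholdGraph ⊤ w t).ConnectedComponent |
          ∃ j ∈ C.supp, j ∈ mstNeighborSet w v ∧ w s(v, j) = t}.ncard =
      (levelComponent w v '' mstNeighborSet w v).ncard := by
  rw [Set.ncard_eq_sum_ncard_sigma (Set.toFinite _)]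
  · refine Finset.sum_congr rfl fun t _ => congrArg Set.ncard (Set.ext fun C => ?_)
    simp only [Set.mem_ofPred_eq, Set.mem_image, levelComponent, Sigma.mk.inj_iff,
      ConnectedComponent.mem_supp_iff]
    constructor
    · rintro ⟨j, rfl, hj, rfl⟩
      exact ⟨j, hj, rfl, HEq.rfl⟩
    · rintro ⟨j, hj, rfl, h⟩
      exact ⟨j, eq_of_heq h, hj, rfl⟩
  · rintro _ ⟨j, ⟨M, hM, hj⟩, rfl⟩
    rw [Set.Finite.mem_toFinset]
    exact ⟨s(v, j), by simpa using (M.mem_edgeSet.mp hj).ne, rfl⟩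

lemma IsMST.ncard_neighborSet_le {M : SimpleGraph α} (hM : IsMST ⊤ w M) :
    (M.neighborSet v).ncard ≤ (levelComponent w v '' mstNeighborSet w v).ncard := by
  have hinj : (M.neighborSet v).InjOn (levelComponent w v) := fun j hj k hk h =>
    by_contra fun hjk => hM.not_reachable_strictThresholdGraph_of_adj_of_adj hj hk hjk
      (levelComponent_eq_iff.mp h).2
  rw [← hinj.ncard_image]
  exact Set.ncard_le_ncard (Set.image_mono fun j hj => ⟨M, hM, hj⟩) (Set.toFinite _)

lemma IsMST.subset_neighborSet_of_forall_ncard_le {M : SimpleGraph α} {J : Set α}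
    (hJN : J ⊆ mstNeighborSet w v) (hJ : J.InjOn (levelComponent w v)) (hM : IsMST ⊤ w M)
    (hmax : ∀ M', IsMST ⊤ w M' →
      (M'.neighborSet v ∩ J).ncard ≤ (M.neighborSet v ∩ J).ncard) :
    J ⊆ M.neighborSet v := by
  intro j hj
  by_contra hjM
  obtain ⟨Me, hMe, hvj⟩ := hJN hj
  obtain ⟨p, hp, -⟩ := hM.1.2.existsUnique_path v j
  have hcut (f) (hf : f ∈ p.edges) : ¬ (M.deleteEdges {f}).Reachable v j :=
    hM.1.2.not_reachable_deleteEdges_of_mem_edges hp hf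
  have hle (f) (hf : f ∈ p.edges) : w f ≤ w s(v, j) :=
    hM.weight_le_of_not_reachable (p.edges_subset_edgeSet hf) (hcut f hf)
  -- otherwise exchanging `f` for `vj` gives an MST with more neighbours in `J`
  have hJedge (f) (hf : f ∈ p.edges) (hfw : w f = w s(v, j)) : ∃ x ∈ J, f = s(v, x) := by
    by_contra! hfJ
    have hM' := hM.deleteEdges_sup_edge (p.edges_subset_edgeSet hf) (hcut f hf) hfw
    exact (hmax _ hM').not_gt <| Set.ncard_lt_ncard
      (neighborSet_inter_ssubset_deleteEdges_sup_edge hvj.ne hj hjM hfJ) (Set.toFinite _)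
  cases p with
  | nil => exact hvj.ne rfl
  | @cons _ u _ hvu q =>
  have hq (e) (he : e ∈ q.edges) : w e < w s(v, j) := by
    refine (hle e (List.mem_cons_of_mem _ he)).lt_of_ne fun hew => ?_
    obtain ⟨x, -, rfl⟩ := hJedge _ (List.mem_cons_of_mem _ he) hew
    exact ((Walk.cons_isPath_iff _ _).mp hp).2 (q.fst_mem_support_of_mem_edges he)
  have huj := q.reachable_strictThresholdGraph hq
  -- the first edge `vu` either joins `v` to `j` below `w(vj)`, or has `u ∈ J` level with `j`
  rcases (hle _ List.mem_cons_self).lt_or_eq with hlt | heq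
  · exact hMe.not_reachable_strictThresholdGraph_of_adj hvj
      ((show (strictThresholdGraph ⊤ w _).Adj v u from ⟨hvu.ne, hlt⟩).reachable.trans huj)
  · obtain ⟨x, hxJ, hx⟩ := hJedge _ List.mem_cons_self heq
    obtain rfl : u = x := Sym2.congr_right.mp hx
    exact hjM (hJ hxJ hj (levelComponent_eq_iff.mpr ⟨heq, heq ▸ huj⟩) ▸ hvu)

lemma exists_isMST [Nonempty α] (w : Sym2 α → ℝ) : ∃ M, IsMST ⊤ w M := by
  obtain ⟨T, -, hT⟩ := (connected_top : (⊤ : SimpleGraph α).Connected).exists_isTree_le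
  obtain ⟨M, hM, hmin⟩ := Set.exists_min_image {M | IsSpanningTree ⊤ M} (totalWeight · w)
    (Set.toFinite _) ⟨T, le_top, hT⟩
  exact ⟨M, hM, hmin⟩

lemma exists_isMST_ncard_image_le (w : Sym2 α → ℝ) (v : α) :
    ∃ M, IsMST ⊤ w M ∧
      (levelComponent w v '' mstNeighborSet w v).ncard ≤ (M.neighborSet v).ncard := by
  have : Nonempty α := ⟨v⟩
  obtain ⟨J, hJN, hJ⟩ := Set.exists_subset_bijOn (mstNeighborSet w v) (levelComponent w v)
  obtain ⟨M, hM, hmax⟩ := Set.exists_max_image {M | IsMST ⊤ w M}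
    (fun M => (M.neighborSet v ∩ J).ncard) (Set.toFinite _) (exists_isMST w)
  refine ⟨M, hM, ?_⟩
  rw [← hJ.image_eq, hJ.injOn.ncard_image]
  exact Set.ncard_le_ncard (hM.subset_neighborSet_of_forall_ncard_le hJN hJ.injOn hmax)
    (Set.toFinite _)

theorem isGreatest_ncard_neighborSet_isMST (w : Sym2 α → ℝ) (v : α) :
    IsGreatest {d | ∃ M, IsMST ⊤ w M ∧ d = (M.neighborSet v).ncard}
      (levelComponent w v '' mstNeighborSet w v).ncard := by
  obtain ⟨M, hM, hle⟩ := exists_isMST_ncard_image_le w v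
  exact ⟨⟨M, hM, hle.antisymm hM.ncard_neighborSet_le⟩,
    by rintro _ ⟨M, hM, rfl⟩; exact hM.ncard_neighborSet_le⟩

end MaxDegree

/-- `δ_max(v)` equals the sum, over the edge-weight values `t` of the
distance graph, of the number of components of the strict threshold graph `G_{<t}`
containing a vertex joined to `v` by an edge of `g` of weight exactly `t`. -/
theorem deltaMax_eq_sum_components {V : Type*} [Finite V] (P : PhyloTree V)
    (v : ↥P.L) :
    P.deltaMax v =
      ∑ t ∈ ((Set.toFinite ((⊤ : SimpleGraph ↥P.L).edgeSet)).image P.wG).toFinset,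
        {C : (strictThresholdGraph (⊤ : SimpleGraph ↥P.L) P.wG t).ConnectedComponent |
          ∃ j ∈ C.supp, P.mstEdge s(v, j) ∧ P.wG s(v, j) = t}.ncard := by
  exact (isGreatest_ncard_neighborSet_isMST P.wG v).csSup_eq.trans
    sum_ncard_eq_ncard_image_levelComponent.symm
end
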